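/- arXiv:2004.08684 — 3 statements merged into one kernel-verified Lean document; each statement's English description precedes it below -/
import Mathlib

section
/- The product • of maps on finite sets, defined via the row-enumeration bijections b_{m,n}(i,j) = (j−1)m+i, is strictly associative: for maps f : [m]→[m'], g : [n]→[n'], h : [p]→[p'] one has (f•g)•h = f•(g•h) as maps [mnp]→[m'n'p'], and its unit is strict: f • id_{[1]} = f = id_{[1]} • f. -/
/-- The product `f • g : [mn] → [m'n']` of maps `f : [m] → [m']`, `g : [n] → [n']`,
defined via the row-enumeration bijections `b_{m,n}(i,j) = (j−1)m + i`:
`(f•g)(k) = (g(q)−1)m' + f(m)` if `m ∣ k` (`k = qm`), and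
`(f•g)(k) = (g(q+1)−1)m' + f(r)` if `k = qm + r`, `0 < r < m`. -/
def bulletMap (m m' : ℕ) (f g : ℕ → ℕ) (k : ℕ) : ℕ :=
  if m ∣ k then (g (k / m) - 1) * m' + f m else (g (k / m + 1) - 1) * m' + f (k % m)

lemma bm_eq (m m' : ℕ) (f g : ℕ → ℕ) (k : ℕ) (hm : 0 < m) (hk : 0 < k) :
    bulletMap m m' f g k = (g ((k - 1) / m + 1) - 1) * m' + f ((k - 1) % m + 1) := by
  have hdm := Nat.div_add_mod (k - 1) m
  set q := (k - 1) / m with hq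
  set r := (k - 1) % m with hr
  have hrm : r < m := Nat.mod_lt _ hm
  have hk1 : k = r + 1 + m * q := by omega
  unfold bulletMap
  rcases eq_or_lt_of_le (Nat.succ_le_of_lt hrm) with he | hlt
  · have hmul : m * (q + 1) = m * q + m := Nat.mul_succ m q
    have hk2 : k = m * (q + 1) := by omega
    have hdvd : m ∣ k := ⟨q + 1, hk2⟩
    rw [if_pos hdvd, hk2, Nat.mul_div_cancel_left _ hm, ← he]
  · have hdiv : k / m = q := by
      rw [hk1, Nat.add_mul_div_left _ _ hm, Nat.div_eq_of_lt hlt, Nat.zero_add]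
    have hmod : k % m = r + 1 := by
      rw [hk1, Nat.add_mul_mod_self_left, Nat.mod_eq_of_lt hlt]
    have hdvd : ¬ m ∣ k := by
      rw [Nat.dvd_iff_mod_eq_zero, hmod]; omega
    rw [if_neg hdvd, hdiv, hmod]

/-- The product `•` of maps of finite sets is strictly associative, with `id_{[1]}`
as a strict unit. -/
theorem stmt6 (m m' n n' p p' : ℕ)
    (hm : 1 ≤ m) (hm' : 1 ≤ m') (hn : 1 ≤ n) (hn' : 1 ≤ n') (hp : 1 ≤ p) (hp' : 1 ≤ p')
    (f g h : ℕ → ℕ)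
    (hf : Set.MapsTo f (Set.Icc 1 m) (Set.Icc 1 m'))
    (hg : Set.MapsTo g (Set.Icc 1 n) (Set.Icc 1 n'))
    (hh : Set.MapsTo h (Set.Icc 1 p) (Set.Icc 1 p')) :
    (∀ k ∈ Set.Icc 1 (m * n * p),
        bulletMap (m * n) (m' * n') (bulletMap m m' f g) h k =
          bulletMap m m' f (bulletMap n n' g h) k) ∧
    (∀ k ∈ Set.Icc 1 m, bulletMap m m' f id k = f k ∧ bulletMap 1 1 id f k = f k) := by
  constructor
  · rintro k ⟨hk1, hk2⟩
    have hmn : 0 < m * n := Nat.mul_pos hm hn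
    rw [bm_eq _ _ _ _ k hmn hk1, bm_eq _ _ _ _ k hm hk1,
        bm_eq _ _ _ _ _ hm (Nat.succ_pos _), bm_eq _ _ _ _ _ hn (Nat.succ_pos _)]
    simp only [Nat.succ_sub_one]
    rw [Nat.mod_mod_of_dvd _ ⟨n, rfl⟩, Nat.mod_mul_right_div_self,
        ← Nat.div_div_eq_div_mul]
    set u := (k - 1) / m % n with hu
    set r := (k - 1) % m with hr
    have hgu : 1 ≤ g (u + 1) :=
      (hg ⟨Nat.le_add_left 1 u, by have := Nat.mod_lt ((k - 1) / m) hn; omega⟩).1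
    set A := h ((k - 1) / m / n + 1) - 1 with hA
    set G := g (u + 1) with hG
    set c := f (r + 1) with hc
    obtain ⟨G', hG'⟩ : ∃ G', G = G' + 1 := ⟨G - 1, by omega⟩
    rw [hG', show A * n' + (G' + 1) - 1 = A * n' + G' from by omega,
        Nat.add_sub_cancel]
    ring
  · rintro k ⟨hk1, hk2⟩
    have hfk : 1 ≤ f k := (hf ⟨hk1, hk2⟩).1
    constructor
    · rw [bm_eq _ _ _ _ k hm hk1, Nat.div_eq_of_lt (by omega), Nat.mod_eq_of_lt (by omega)]
      simp only [id_eq, Nat.sub_self, Nat.zero_mul, Nat.zero_add]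
      congr 1
      omega
    · rw [bm_eq _ _ _ _ k Nat.one_pos hk1]
      simp only [Nat.div_one, Nat.mod_one, id_eq, Nat.mul_one, Nat.zero_add]
      have hkk : k - 1 + 1 = k := by omega
      rw [hkk]
      omega
end

section
/- The right distributor d'_{m,n,p} : [mp+np]→[(m+n)p], defined by d'(s) = (ι¹_{[m],[n]} • id_{[p]})(s) for s ≤ mp and d'(s) = (ι²_{[m],[n]} • id_{[p]})(s−mp) for mp < s ≤ mp+np, is a bijection; for m,n,p ≥ 1 it is given explicitly by d'(s) = s + (q−1)n if s ≤ mp and m | s (s = qm), d'(s) = s + qn if s ≤ mp and m ∤ s (s = qm+r), d'(s) = s + (q'−p)m if s > mp and n | (s−mp) (s−mp = q'n), and d'(s) = s + (q'−p+1)m if s > mp and n ∤ (s−mp) (s−mp = q'n+r'). -/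
/-- The right distributor `d'_{m,n,p} : [mp + np] → [(m+n)p]`:
`d'(s) = (ι¹_{[m],[n]} • id_{[p]})(s)` for `s ≤ mp` and
`d'(s) = (ι²_{[m],[n]} • id_{[p]})(s − mp)` for `s > mp`, where `ι¹(i) = i` and
`ι²(j) = m + j` are the coproduct injections. -/
def dR (m n p s : ℕ) : ℕ :=
  if s ≤ m * p then bulletMap m (m + n) (fun i => i) (fun j => j) s
  else bulletMap n (m + n) (fun j => m + j) (fun j => j) (s - m * p)

lemma qr_div (q b r : ℕ) (hr : r < b) : (q * b + r) / b = q := by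
  have hb : 0 < b := by omega
  rw [mul_comm, Nat.mul_add_div hb, Nat.div_eq_of_lt hr, add_zero]

lemma qr_mod (q b r : ℕ) (hr : r < b) : (q * b + r) % b = r := by
  rw [mul_comm, Nat.mul_add_mod, Nat.mod_eq_of_lt hr]

lemma bullet_id (b B t : ℕ) (ht : 1 ≤ t) (hb : 0 < b) :
    bulletMap b B (fun i => i) (fun j => j) t = ((t-1)/b)*B + (t-1)%b + 1 := by
  simp only [bulletMap]
  by_cases hd : b ∣ t
  · rw [if_pos hd]
    obtain ⟨k, hk⟩ := hd
    have hk0 : k ≠ 0 := by rintro rfl; simp at hk; omega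
    obtain ⟨k', rfl⟩ : ∃ k', k = k' + 1 := ⟨k - 1, by omega⟩
    have ht' : t / b = k' + 1 := by rw [hk]; exact Nat.mul_div_cancel_left _ hb
    have e : t - 1 = k' * b + (b - 1) := by
      have : t = k' * b + b := by rw [hk]; ring
      omega
    rw [e, qr_div _ _ _ (by omega), qr_mod _ _ _ (by omega), ht']
    simp only [Nat.add_sub_cancel]
    omega
  · rw [if_neg hd]
    have hr : t % b ≠ 0 := fun h => hd (Nat.dvd_of_mod_eq_zero h)
    have hrb : t % b < b := Nat.mod_lt _ hb
    have e : t - 1 = (t/b)*b + (t % b - 1) := by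
      have h2 : (t/b)*b + t % b = t := by rw [mul_comm]; exact Nat.div_add_mod t b
      omega
    rw [e, qr_div _ _ _ (by omega), qr_mod _ _ _ (by omega)]
    simp only [Nat.add_sub_cancel]
    omega

lemma bullet_shift (b B c t : ℕ) :
    bulletMap b B (fun j => c + j) (fun j => j) t
      = c + bulletMap b B (fun i => i) (fun j => j) t := by
  simp only [bulletMap]; split <;> ring

lemma dR_le (m n p s : ℕ) (h1 : 1 ≤ s) (h2 : s ≤ m * p) :
    dR m n p s = ((s-1)/m)*(m+n) + (s-1)%m + 1 := by
  have hm : 0 < m := by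
    rcases Nat.eq_zero_or_pos m with h | h
    · subst h; simp at h2; omega
    · exact h
  rw [dR, if_pos h2]
  exact bullet_id m (m+n) s h1 hm

lemma dR_gt (m n p s : ℕ) (h1 : m * p < s) (h2 : s ≤ m*p + n*p) :
    dR m n p s = m + (((s - m*p - 1)/n)*(m+n) + (s - m*p - 1)%n + 1) := by
  have hn : 0 < n := by
    rcases Nat.eq_zero_or_pos n with h | h
    · subst h; simp at h2; omega
    · exact h
  rw [dR, if_neg (by omega), bullet_shift, bullet_id n (m+n) (s - m*p) (by omega) hn]

/-- Inverse of the right distributor. -/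
def dRinv (m n p y : ℕ) : ℕ :=
  if (y-1) % (m+n) < m then ((y-1)/(m+n))*m + (y-1)%(m+n) + 1
  else m*p + ((y-1)/(m+n))*n + ((y-1)%(m+n) - m) + 1

/-- `d'_{m,n,p}` is a bijection, and for `m,n,p ≥ 1` it is given by the explicit
division formulas. -/
theorem stmt11 (m n p : ℕ) :
    Set.BijOn (dR m n p) (Set.Icc 1 (m * p + n * p)) (Set.Icc 1 ((m + n) * p)) ∧
    (1 ≤ m → 1 ≤ n → 1 ≤ p → ∀ s ∈ Set.Icc 1 (m * p + n * p),
      dR m n p s =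
        if s ≤ m * p then
          (if m ∣ s then s + (s / m - 1) * n else s + (s / m) * n)
        else
          (if n ∣ (s - m * p) then s + ((s - m * p) / n) * m - p * m
           else s + ((s - m * p) / n + 1) * m - p * m)) := by
  constructor
  · refine Set.InvOn.bijOn (f' := dRinv m n p) ⟨?_, ?_⟩ ?_ ?_
    · -- LeftInvOn: dRinv (dR s) = s
      intro s hs
      simp only [Set.mem_Icc] at hs
      obtain ⟨hs1, hs2⟩ := hs
      by_cases hle : s ≤ m * p
      · have hm : 0 < m := by
          rcases Nat.eq_zero_or_pos m with h | h
          · subst h; simp at hle; omega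
          · exact h
        rw [dR_le m n p s hs1 hle]
        set q := (s-1)/m with hqd
        set r := (s-1)%m with hrd
        have hqr : q*m + r = s - 1 := by rw [hqd, hrd, mul_comm]; exact Nat.div_add_mod _ _
        have hrm : r < m := by rw [hrd]; exact Nat.mod_lt _ hm
        simp only [dRinv]
        rw [show q*(m+n) + r + 1 - 1 = q*(m+n) + r by omega,
            qr_div _ _ _ (by omega), qr_mod _ _ _ (by omega), if_pos hrm]
        omega
      · have hn : 0 < n := by
          rcases Nat.eq_zero_or_pos n with h | h
          · subst h; simp at hs2; omega
          · exact h
        rw [dR_gt m n p s (by omega) hs2]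
        set q := (s - m*p - 1)/n with hqd
        set r := (s - m*p - 1)%n with hrd
        have hqr : q*n + r = s - m*p - 1 := by rw [hqd, hrd, mul_comm]; exact Nat.div_add_mod _ _
        have hrn : r < n := by rw [hrd]; exact Nat.mod_lt _ hn
        rw [show m + (q*(m+n) + r + 1) = q*(m+n) + (m+r) + 1 by ring]
        simp only [dRinv]
        rw [show q*(m+n) + (m+r) + 1 - 1 = q*(m+n) + (m+r) by omega,
            qr_div _ _ _ (by omega), qr_mod _ _ _ (by omega), if_neg (by omega)]
        omega
    · -- RightInvOn: dR (dRinv y) = y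
      intro y hy
      simp only [Set.mem_Icc] at hy
      obtain ⟨hy1, hy2⟩ := hy
      have hmn : 0 < m + n := by
        rcases Nat.eq_zero_or_pos (m+n) with h | h
        · exfalso; have h0 : (m+n)*p = 0 := by rw [h, zero_mul]
          omega
        · exact h
      simp only [dRinv]
      set q := (y-1)/(m+n) with hqd
      set r := (y-1)%(m+n) with hrd
      have hqr : q*(m+n) + r = y - 1 := by rw [hqd, hrd, mul_comm]; exact Nat.div_add_mod _ _
      have hrmn : r < m + n := by rw [hrd]; exact Nat.mod_lt _ hmn
      have hqp : q < p := by
        rw [hqd]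
        apply (Nat.div_lt_iff_lt_mul hmn).mpr
        have h3 : (m+n)*p = p*(m+n) := mul_comm _ _
        omega
      by_cases hrm : r < m
      · rw [if_pos hrm]
        have hm : 0 < m := by omega
        have h4 : (q+1)*m ≤ p*m := Nat.mul_le_mul_right _ (by omega)
        have e1 : (q+1)*m = q*m + m := by ring
        have e2 : p*m = m*p := mul_comm _ _
        rw [dR_le m n p (q*m + r + 1) (by omega) (by omega)]
        rw [show q*m + r + 1 - 1 = q*m + r by omega,
            qr_div _ _ _ hrm, qr_mod _ _ _ hrm]
        omega
      · rw [if_neg hrm]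
        have hn : 0 < n := by omega
        have h4 : (q+1)*n ≤ p*n := Nat.mul_le_mul_right _ (by omega)
        have e1 : (q+1)*n = q*n + n := by ring
        have e2 : p*n = n*p := mul_comm _ _
        rw [dR_gt m n p (m*p + q*n + (r - m) + 1) (by omega) (by omega)]
        rw [show m*p + q*n + (r - m) + 1 - m*p - 1 = q*n + (r - m) by omega,
            qr_div _ _ _ (by omega), qr_mod _ _ _ (by omega)]
        omega
    · -- MapsTo dR
      intro s hs
      simp only [Set.mem_Icc] at hs ⊢
      obtain ⟨hs1, hs2⟩ := hs
      by_cases hle : s ≤ m * p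
      · have hm : 0 < m := by
          rcases Nat.eq_zero_or_pos m with h | h
          · subst h; simp at hle; omega
          · exact h
        rw [dR_le m n p s hs1 hle]
        set q := (s-1)/m with hqd
        set r := (s-1)%m with hrd
        have hqr : q*m + r = s - 1 := by rw [hqd, hrd, mul_comm]; exact Nat.div_add_mod _ _
        have hrm : r < m := by rw [hrd]; exact Nat.mod_lt _ hm
        have hqp : q < p := by
          rw [hqd]
          apply (Nat.div_lt_iff_lt_mul hm).mpr
          have h3 : m*p = p*m := mul_comm _ _
          omega
        have h4 : (q+1)*(m+n) ≤ p*(m+n) := Nat.mul_le_mul_right _ (by omega)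
        have e1 : (q+1)*(m+n) = q*(m+n) + (m+n) := by ring
        have e2 : p*(m+n) = (m+n)*p := mul_comm _ _
        omega
      · have hn : 0 < n := by
          rcases Nat.eq_zero_or_pos n with h | h
          · subst h; simp at hs2; omega
          · exact h
        rw [dR_gt m n p s (by omega) hs2]
        set q := (s - m*p - 1)/n with hqd
        set r := (s - m*p - 1)%n with hrd
        have hqr : q*n + r = s - m*p - 1 := by rw [hqd, hrd, mul_comm]; exact Nat.div_add_mod _ _
        have hrn : r < n := by rw [hrd]; exact Nat.mod_lt _ hn
        have hqp : q < p := by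
          rw [hqd]
          apply (Nat.div_lt_iff_lt_mul hn).mpr
          have h3 : n*p = p*n := mul_comm _ _
          omega
        have h4 : (q+1)*(m+n) ≤ p*(m+n) := Nat.mul_le_mul_right _ (by omega)
        have e1 : (q+1)*(m+n) = q*(m+n) + (m+n) := by ring
        have e2 : p*(m+n) = (m+n)*p := mul_comm _ _
        omega
    · -- MapsTo dRinv
      intro y hy
      simp only [Set.mem_Icc] at hy ⊢
      obtain ⟨hy1, hy2⟩ := hy
      have hmn : 0 < m + n := by
        rcases Nat.eq_zero_or_pos (m+n) with h | h
        · exfalso; have h0 : (m+n)*p = 0 := by rw [h, zero_mul]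
          omega
        · exact h
      simp only [dRinv]
      set q := (y-1)/(m+n) with hqd
      set r := (y-1)%(m+n) with hrd
      have hqr : q*(m+n) + r = y - 1 := by rw [hqd, hrd, mul_comm]; exact Nat.div_add_mod _ _
      have hrmn : r < m + n := by rw [hrd]; exact Nat.mod_lt _ hmn
      have hqp : q < p := by
        rw [hqd]
        apply (Nat.div_lt_iff_lt_mul hmn).mpr
        have h3 : (m+n)*p = p*(m+n) := mul_comm _ _
        omega
      by_cases hrm : r < m
      · rw [if_pos hrm]
        have h4 : (q+1)*m ≤ p*m := Nat.mul_le_mul_right _ (by omega)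
        have e1 : (q+1)*m = q*m + m := by ring
        have e2 : p*m = m*p := mul_comm _ _
        omega
      · rw [if_neg hrm]
        have h4 : (q+1)*n ≤ p*n := Nat.mul_le_mul_right _ (by omega)
        have e1 : (q+1)*n = q*n + n := by ring
        have e2 : p*n = n*p := mul_comm _ _
        omega
  · -- explicit formula
    intro hm hn hp s hs
    simp only [Set.mem_Icc] at hs
    obtain ⟨hs1, hs2⟩ := hs
    by_cases hle : s ≤ m * p
    · rw [if_pos hle, dR_le m n p s hs1 hle]
      set q := (s-1)/m with hqd
      set r := (s-1)%m with hrd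
      have hqr : q*m + r = s - 1 := by rw [hqd, hrd, mul_comm]; exact Nat.div_add_mod _ _
      have hrm : r < m := by rw [hrd]; exact Nat.mod_lt _ (by omega)
      by_cases hd : m ∣ s
      · rw [if_pos hd]
        have hs' : s = q*m + (r+1) := by omega
        have hdr : m ∣ (r+1) := by
          rw [hs'] at hd
          exact (Nat.dvd_add_right (dvd_mul_left m q)).mp hd
        have hr1 : r + 1 = m := le_antisymm (by omega) (Nat.le_of_dvd (by omega) hdr)
        have hsm : s / m = q + 1 := by
          have hs'' : s = (q+1)*m + 0 := by
            have e : (q+1)*m = q*m + m := by ring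
            omega
          rw [hs'']; exact qr_div _ _ _ (by omega)
        rw [hsm]
        simp only [Nat.add_sub_cancel]
        have e : q*(m+n) = q*m + q*n := by ring
        omega
      · rw [if_neg hd]
        have hne : r + 1 ≠ m := by
          intro h
          apply hd
          have hs' : s = (q+1)*m := by
            have e : (q+1)*m = q*m + m := by ring
            omega
          exact hs' ▸ dvd_mul_left m (q+1)
        have hsm : s / m = q := by
          have hs' : s = q*m + (r+1) := by omega
          rw [hs']; exact qr_div _ _ _ (by omega)
        rw [hsm]
        have e : q*(m+n) = q*m + q*n := by ring
        omega
    · rw [if_neg hle, dR_gt m n p s (by omega) hs2]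
      set q := (s - m*p - 1)/n with hqd
      set r := (s - m*p - 1)%n with hrd
      have hqr : q*n + r = s - m*p - 1 := by rw [hqd, hrd, mul_comm]; exact Nat.div_add_mod _ _
      have hrn : r < n := by rw [hrd]; exact Nat.mod_lt _ (by omega)
      have e1 : q*(m+n) = q*m + q*n := by ring
      have e2 : (q+1)*m = q*m + m := by ring
      have e3 : p*m = m*p := mul_comm _ _
      by_cases hd : n ∣ (s - m*p)
      · rw [if_pos hd]
        have hs' : s - m*p = q*n + (r+1) := by omega
        have hdr : n ∣ (r+1) := by
          rw [hs'] at hd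
          exact (Nat.dvd_add_right (dvd_mul_left n q)).mp hd
        have hr1 : r + 1 = n := le_antisymm (by omega) (Nat.le_of_dvd (by omega) hdr)
        have hsn : (s - m*p) / n = q + 1 := by
          have hs'' : s - m*p = (q+1)*n + 0 := by
            have e : (q+1)*n = q*n + n := by ring
            omega
          rw [hs'']; exact qr_div _ _ _ (by omega)
        rw [hsn]
        omega
      · rw [if_neg hd]
        have hsn : (s - m*p) / n = q := by
          have hne : r + 1 ≠ n := by
            intro h
            apply hd
            have hs' : s - m*p = (q+1)*n := by
              have e : (q+1)*n = q*n + n := by ring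
              omega
            exact hs' ▸ dvd_mul_left n (q+1)
          have hs' : s - m*p = q*n + (r+1) := by omega
          rw [hs']; exact qr_div _ _ _ (by omega)
        rw [hsn]
        omega
end

section
/- For each p ≥ 2 and i = 2,…,p, let σ_{i,p} ∈ S_{2p} be the product of disjoint transpositions (i,i+1)(i+2,i+3)⋯(i+2(p−i), i+2(p−i)+1). Then the right distributor d'_{1,1,p} ∈ S_{2p} (sending s ↦ 2s−1 for s ≤ p and s ↦ 2(s−p) for s > p) equals the composite σ_{2,p} σ_{3,p} ⋯ σ_{p−1,p} σ_{p,p}. -/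
/-!
Peeling off the leftmost factor, `σ_{i+1} σ_{i+2} ⋯ σ_{i+k}` (with `σ_j = σ_{j,i+k}`) is
`σ_{i+1}` composed with the same kind of product one level deeper, on the block
`{i+2, …, i+2k-1}`. By induction on `k`, such a product is the in-shuffle of the block
`{i+1, …, i+2k}` that sends its first half to the even offsets and its second half to the odd
offsets; the distributor is the case `i = 1`, `k = p - 1`.
-/

/-- The permutation `σ_{i,p} = (i,i+1)(i+2,i+3)⋯(i+2(p−i), i+2(p−i)+1)` of `{1,…,2p}`,
a product of disjoint transpositions (viewed as a permutation of `ℕ`, 1-indexed). -/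
def sigmaPerm (p i : ℕ) : Equiv.Perm ℕ :=
  (((List.range (p - i + 1)).map fun j => Equiv.swap (i + 2 * j) (i + 2 * j + 1))).prod

open Equiv

/-- The in-shuffle of the block `{i+1, …, i+2k}`, extended by the identity. -/
def inShuffle (i k s : ℕ) : ℕ :=
  if s < i + 1 ∨ i + 2 * k < s then s
  else if s ≤ i + k then 2 * s - i else 2 * (s - (i + k)) + i - 1

lemma prod_swap_pairs_apply (i n s : ℕ) :
    ((List.range n).map fun j => swap (i + 2 * j) (i + 2 * j + 1)).prod s =
      if i ≤ s ∧ s < i + 2 * n then (if (s - i) % 2 = 0 then s + 1 else s - 1) else s := by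
  induction n generalizing s with
  | zero => simp
  | succ n ih =>
    rw [List.range_succ, List.map_append, List.prod_append, List.map_singleton,
      List.prod_singleton, Perm.mul_apply]
    by_cases h₁ : s = i + 2 * n
    · rw [h₁, swap_apply_left, ih]
      split_ifs <;> omega
    by_cases h₂ : s = i + 2 * n + 1
    · rw [h₂, swap_apply_right, ih]
      split_ifs <;> omega
    rw [swap_apply_of_ne_of_ne h₁ h₂, ih]
    split_ifs <;> omega

lemma sigmaPerm_apply (p i s : ℕ) :
    sigmaPerm p i s =
      if i ≤ s ∧ s < i + 2 * (p - i + 1) then (if (s - i) % 2 = 0 then s + 1 else s - 1)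
      else s :=
  prod_swap_pairs_apply i (p - i + 1) s

lemma prod_sigmaPerm_apply (k i s : ℕ) :
    ((List.range k).map fun t => sigmaPerm (i + k) (i + 1 + t)).prod s = inShuffle i k s := by
  induction k generalizing i with
  | zero => simp [inShuffle]
  | succ k ih =>
    have tail : (fun t => sigmaPerm (i + (k + 1)) (i + 1 + t)) ∘ Nat.succ =
        fun t => sigmaPerm (i + 1 + k) (i + 1 + 1 + t) := by
      funext t
      simp only [Function.comp_apply]
      congr 1 <;> omega
    rw [List.range_succ_eq_map, List.map_cons, List.prod_cons, Perm.mul_apply, List.map_map,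
      tail, ih, sigmaPerm_apply]
    unfold inShuffle
    split_ifs <;> omega

theorem stmt13_general (p : ℕ) :
    ∀ s ∈ Set.Icc 1 (2 * p),
      ((((List.range (p - 1)).map fun t => sigmaPerm p (t + 2))).prod : Equiv.Perm ℕ) s =
        if s ≤ p then 2 * s - 1 else 2 * (s - p) := by
  rintro s ⟨hs₁, hs₂⟩
  have reindex : (fun t => sigmaPerm p (t + 2)) = fun t => sigmaPerm (1 + (p - 1)) (1 + 1 + t) := by
    funext t
    congr 1 <;> omega
  rw [reindex, prod_sigmaPerm_apply, inShuffle]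
  split_ifs <;> omega

/-- For `p ≥ 2`, the right distributor `d'_{1,1,p}` (sending `s ↦ 2s−1` for `s ≤ p` and
`s ↦ 2(s−p)` for `s > p`) equals the composite `σ_{2,p} σ_{3,p} ⋯ σ_{p,p}`
(rightmost factor applied first). -/
theorem stmt13 (p : ℕ) (hp : 2 ≤ p) :
    ∀ s ∈ Set.Icc 1 (2 * p),
      ((((List.range (p - 1)).map fun t => sigmaPerm p (t + 2))).prod : Equiv.Perm ℕ) s =
        if s ≤ p then 2 * s - 1 else 2 * (s - p) :=
  stmt13_general p
end
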